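/- The limit as w → +∞ of (2·arcosh((cosh(w) + √(cosh²w + 8))/4))/w equals 2. -/

import Mathlib

/-! The argument `a = (cosh w + √(cosh² w + 8)) / 4` satisfies `cosh w / 2 ≤ a ≤ cosh w`.
Since `arcosh` is increasing and `arcosh a ≥ log a`, this traps `arcosh a` between
`w - log 4` and `w`, and a function within bounded distance of `w` is asymptotic to `w`. -/

noncomputable def arcosh (x : ℝ) : ℝ := Real.log (x + Real.sqrt (x ^ 2 - 1))

open Filter Topology

theorem tendsto_div_self_atTop_of_sub_bounded {f : ℝ → ℝ} {a b : ℝ}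
    (hlo : ∀ᶠ w in atTop, w - a ≤ f w) (hhi : ∀ᶠ w in atTop, f w ≤ w + b) :
    Tendsto (fun w => f w / w) atTop (𝓝 1) := by
  have shift (k : ℝ) : Tendsto (fun w : ℝ => (w + k) / w) atTop (𝓝 1) := by
    have hlim : Tendsto (fun w : ℝ => 1 + k * w⁻¹) atTop (𝓝 (1 + k * 0)) :=
      tendsto_const_nhds.add (tendsto_inv_atTop_zero.const_mul k)
    rw [mul_zero, add_zero] at hlim
    refine hlim.congr' ?_
    filter_upwards [eventually_ne_atTop 0] with w hw
    field_simp
  refine tendsto_of_tendsto_of_tendsto_of_le_of_le' (shift (-a)) (shift b) ?_ ?_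
  · filter_upwards [hlo, eventually_gt_atTop 0] with w hw hpos
    rw [← sub_eq_add_neg]
    gcongr
  · filter_upwards [hhi, eventually_gt_atTop 0] with w hw hpos
    gcongr

namespace Real

theorem exp_div_two_le_cosh (x : ℝ) : exp x / 2 ≤ cosh x := by
  rw [cosh_eq]
  linarith [exp_pos (-x)]

theorem log_le_arcosh {x : ℝ} (hx : 0 < x) : log x ≤ arcosh x :=
  log_le_log hx (le_add_of_nonneg_right (sqrt_nonneg _))

theorem div_two_le_add_sqrt_sq_add_eight_div_four (c : ℝ) : c / 2 ≤ (c + √(c ^ 2 + 8)) / 4 := by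
  have : c ≤ √(c ^ 2 + 8) := le_sqrt_of_sq_le (by linarith)
  linarith

theorem add_sqrt_sq_add_eight_div_four_le {c : ℝ} (hc : 1 ≤ c) : (c + √(c ^ 2 + 8)) / 4 ≤ c := by
  have : √(c ^ 2 + 8) ≤ 3 * c := sqrt_le_iff.2 ⟨by linarith, by nlinarith⟩
  linarith

theorem sub_log_four_le_arcosh_cosh_add_sqrt (w : ℝ) :
    w - log 4 ≤ arcosh ((cosh w + √(cosh w ^ 2 + 8)) / 4) := by
  have hexp : exp w / 4 ≤ (cosh w + √(cosh w ^ 2 + 8)) / 4 := by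
    linarith [exp_div_two_le_cosh w, div_two_le_add_sqrt_sq_add_eight_div_four (cosh w)]
  calc w - log 4 = log (exp w / 4) := by rw [log_div (exp_ne_zero w) four_ne_zero, log_exp]
    _ ≤ log ((cosh w + √(cosh w ^ 2 + 8)) / 4) := log_le_log (by positivity) hexp
    _ ≤ arcosh ((cosh w + √(cosh w ^ 2 + 8)) / 4) := log_le_arcosh (by positivity)

theorem arcosh_cosh_add_sqrt_le {w : ℝ} (hw : 0 ≤ w) :
    arcosh ((cosh w + √(cosh w ^ 2 + 8)) / 4) ≤ w := by
  calc arcosh ((cosh w + √(cosh w ^ 2 + 8)) / 4) ≤ arcosh (cosh w) :=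
        (arcosh_le_arcosh (by positivity) (cosh_pos w)).2
          (add_sqrt_sq_add_eight_div_four_le (one_le_cosh w))
    _ = w := arcosh_cosh hw

end Real

theorem arcosh_eq_real_arcosh : arcosh = Real.arcosh := rfl

theorem stmt_6 :
    Filter.Tendsto
      (fun w : ℝ => 2 * arcosh ((Real.cosh w + Real.sqrt (Real.cosh w ^ 2 + 8)) / 4) / w)
      Filter.atTop (nhds 2) := by
  rw [arcosh_eq_real_arcosh]
  have hlo : ∀ᶠ w in atTop,
      w - Real.log 4 ≤ Real.arcosh ((Real.cosh w + √(Real.cosh w ^ 2 + 8)) / 4) :=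
    Eventually.of_forall Real.sub_log_four_le_arcosh_cosh_add_sqrt
  have hhi : ∀ᶠ w in atTop,
      Real.arcosh ((Real.cosh w + √(Real.cosh w ^ 2 + 8)) / 4) ≤ w + 0 := by
    filter_upwards [eventually_ge_atTop 0] with w hw
    exact (Real.arcosh_cosh_add_sqrt_le hw).trans_eq (add_zero w).symm
  simpa only [mul_div_assoc, mul_one] using
    (tendsto_div_self_atTop_of_sub_bounded hlo hhi).const_mul 2
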